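/- Let T be a bounded linear operator on H admitting a reduced A-adjoint T^♯. Then (1/4)·‖T^♯T + TT^♯‖_A ≤ (1/2)·√(‖Re_A(T)⁴ + Im_A(T)⁴‖_A + 2‖Im_A(T)²·Re_A(T)²‖_A). -/

import Mathlib

open ContinuousLinearMap

variable {H : Type*} [NormedAddCommGroup H] [InnerProductSpace ℂ H] [CompleteSpace H]

/-- The seminorm on `H` induced by a positive operator `A`: `‖x‖_A = √⟨Ax,x⟩`. -/
noncomputable def vnA (A : H →L[ℂ] H) (x : H) : ℝ :=
  Real.sqrt (RCLike.re (inner ℂ (A x) x : ℂ))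

/-- The `A`-seminorm of an operator: `‖X‖_A = sup {‖Xx‖_A : ‖x‖_A = 1}`. -/
noncomputable def opnA (A : H →L[ℂ] H) (X : H →L[ℂ] H) : ℝ :=
  sSup ((fun x => vnA A (X x)) '' {x : H | vnA A x = 1})

/-- The `A`-numerical radius: `ω_A(X) = sup {|⟨Xx,x⟩_A| : ‖x‖_A = 1}`. -/
noncomputable def wA (A : H →L[ℂ] H) (X : H →L[ℂ] H) : ℝ :=
  sSup ((fun x => ‖(inner ℂ (A (X x)) x : ℂ)‖) '' {x : H | vnA A x = 1})

/-- `S` is the reduced `A`-adjoint of `T`: `A ∘ S = T* ∘ A` and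
`range S ⊆ closure (range A)`. -/
def IsReducedAdjA (A T S : H →L[ℂ] H) : Prop :=
  A ∘L S = (ContinuousLinearMap.adjoint T) ∘L A ∧
    Set.range S ⊆ closure (Set.range (A : H → H))

/-- `X` is `A`-selfadjoint: `A ∘ X = X* ∘ A`. -/
def IsSelfAdjA (A X : H →L[ℂ] H) : Prop :=
  A ∘L X = (ContinuousLinearMap.adjoint X) ∘L A

/-- `Re_A(T) = (T + T♯)/2`. -/
noncomputable def ReA (T Ts : H →L[ℂ] H) : H →L[ℂ] H := (2 : ℂ)⁻¹ • (T + Ts)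

/-- `Im_A(T) = (T - T♯)/(2i)`. -/
noncomputable def ImA (T Ts : H →L[ℂ] H) : H →L[ℂ] H := (2 * Complex.I)⁻¹ • (T - Ts)

/-!
Write `‖x‖_A = ‖√A x‖`. If `A Z = W* A`, Cauchy–Schwarz gives `‖Z x‖_A² ≤ ‖x‖_A ‖W Z x‖_A`.
Applied to the powers `Z^(2^n)` of an `A`-selfadjoint `Z`, this bounds `‖Z x‖_A` by `‖Z‖` on the
`A`-unit sphere, so every `A`-seminorm below is a finite supremum; the same inequality gives
`‖Z‖_A ≤ √‖W Z‖_A` and `‖Z‖_A = ‖W‖_A`. With `R = Re_A T`, `J = Im_A T` (both `A`-selfadjoint),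
`T♯T + TT♯ = 2 X` for `X = R² + J²`, and `X² = R⁴ + J⁴ + R²J² + J²R²` where `R²J²` is the
`A`-adjoint of `J²R²`. Hence `‖T♯T + TT♯‖_A ≤ 2 √‖X²‖_A ≤ 2 √(‖R⁴ + J⁴‖_A + 2 ‖J²R²‖_A)`.
-/
section Seminorm

variable {A : H →L[ℂ] H}

lemma inner_apply_eq_inner_sqrt (hA : A.IsPositive) (x y : H) :
    (inner ℂ (A x) y : ℂ) = inner ℂ (CFC.sqrt A x) (CFC.sqrt A y) := by
  have hA0 : 0 ≤ A := (nonneg_iff_isPositive A).mpr hA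
  have hB : IsSelfAdjoint (CFC.sqrt A) :=
    ((nonneg_iff_isPositive _).mp (CFC.sqrt_nonneg A)).isSelfAdjoint
  conv_lhs => rw [← CFC.sqrt_mul_sqrt_self A hA0, mul_apply_eq_comp]
  exact hB.isSymmetric _ _

lemma vnA_eq_norm_sqrt (hA : A.IsPositive) (x : H) : vnA A x = ‖CFC.sqrt A x‖ := by
  rw [vnA, inner_apply_eq_inner_sqrt hA, inner_self_eq_norm_sq (𝕜 := ℂ),
    Real.sqrt_sq (norm_nonneg _)]

omit [CompleteSpace H] in
lemma vnA_nonneg (x : H) : 0 ≤ vnA A x := Real.sqrt_nonneg _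

omit [CompleteSpace H] in
lemma vnA_sq (hA : A.IsPositive) (x : H) : vnA A x ^ 2 = RCLike.re (inner ℂ (A x) x : ℂ) :=
  Real.sq_sqrt (hA.re_inner_nonneg_left x)

lemma vnA_add_le (hA : A.IsPositive) (x y : H) : vnA A (x + y) ≤ vnA A x + vnA A y := by
  simp only [vnA_eq_norm_sqrt hA, map_add]
  exact norm_add_le _ _

lemma vnA_smul (hA : A.IsPositive) (c : ℂ) (x : H) : vnA A (c • x) = ‖c‖ * vnA A x := by
  simp only [vnA_eq_norm_sqrt hA, map_smul, norm_smul]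

lemma vnA_le_norm_mul (hA : A.IsPositive) (x : H) : vnA A x ≤ ‖CFC.sqrt A‖ * ‖x‖ := by
  rw [vnA_eq_norm_sqrt hA]
  exact le_opNorm _ _

lemma re_inner_le_vnA_mul_vnA (hA : A.IsPositive) (x y : H) :
    RCLike.re (inner ℂ (A x) y : ℂ) ≤ vnA A x * vnA A y := by
  rw [inner_apply_eq_inner_sqrt hA, vnA_eq_norm_sqrt hA, vnA_eq_norm_sqrt hA]
  exact re_inner_le_norm _ _

end Seminorm

/-- `S` is an `A`-adjoint of `T`: `⟨T x, y⟩_A = ⟨x, S y⟩_A`. -/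
def IsAdjA (A T S : H →L[ℂ] H) : Prop :=
  A ∘L S = adjoint T ∘L A

namespace IsAdjA

variable {A T S T' S' : H →L[ℂ] H}

lemma apply (h : IsAdjA A T S) (x : H) : A (S x) = adjoint T (A x) :=
  DFunLike.congr_fun h x

lemma symm (hA : IsSelfAdjoint A) (h : IsAdjA A T S) : IsAdjA A S T := by
  have h' := congrArg adjoint h
  rw [adjoint_comp, adjoint_comp, adjoint_adjoint, hA.adjoint_eq] at h'
  exact h'.symm

lemma comp (h : IsAdjA A T S) (h' : IsAdjA A T' S') : IsAdjA A (T ∘L T') (S' ∘L S) := by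
  rw [IsAdjA, ← comp_assoc, h', comp_assoc, h, ← comp_assoc, adjoint_comp]

lemma add (h : IsAdjA A T S) (h' : IsAdjA A T' S') : IsAdjA A (T + T') (S + S') := by
  rw [IsAdjA, comp_add, h, h', map_add, add_comp]

lemma sub (h : IsAdjA A T S) (h' : IsAdjA A T' S') : IsAdjA A (T - T') (S - S') := by
  rw [IsAdjA, comp_sub, h, h', map_sub, sub_comp]

lemma smul (h : IsAdjA A T S) (c : ℂ) : IsAdjA A (c • T) (starRingEnd ℂ c • S) := by
  rw [IsAdjA, comp_smul, h, map_smulₛₗ, smul_comp]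

lemma pow (h : IsAdjA A T S) (n : ℕ) : IsAdjA A (T ^ n) (S ^ n) := by
  induction n with
  | zero => simp [IsAdjA, one_def, adjoint_id]
  | succ n ih =>
    have h' := ih.comp h
    rwa [← mul_def, ← mul_def, ← pow_succ, ← pow_succ'] at h'

end IsAdjA

section ReImA

variable {A T Ts : H →L[ℂ] H}

lemma IsAdjA.reA (hA : IsSelfAdjoint A) (h : IsAdjA A T Ts) :
    IsAdjA A (ReA T Ts) (ReA T Ts) := by
  have h' := (h.add (h.symm hA)).smul (2 : ℂ)⁻¹
  rwa [add_comm Ts, map_inv₀, map_ofNat] at h'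

lemma IsAdjA.imA (hA : IsSelfAdjoint A) (h : IsAdjA A T Ts) :
    IsAdjA A (ImA T Ts) (ImA T Ts) := by
  have h' := (h.sub (h.symm hA)).smul (2 * Complex.I)⁻¹
  have hc : starRingEnd ℂ (2 * Complex.I)⁻¹ = -(2 * Complex.I)⁻¹ := by simp [map_ofNat]
  rwa [hc, neg_smul, ← smul_neg, neg_sub] at h'

omit [CompleteSpace H] in
lemma comp_add_comp_eq_two_smul_reA_sq_add_imA_sq (T Ts : H →L[ℂ] H) :
    Ts ∘L T + T ∘L Ts = (2 : ℂ) • (ReA T Ts ^ 2 + ImA T Ts ^ 2) := by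
  have hI : (2 * Complex.I)⁻¹ * (2 * Complex.I)⁻¹ = -(2 : ℂ)⁻¹ * 2⁻¹ := by
    rw [← mul_inv, mul_mul_mul_comm, Complex.I_mul_I]; ring
  simp only [ReA, ImA, pow_two, smul_mul_smul_comm, hI, mul_add, add_mul, mul_sub, sub_mul,
    ← mul_def]
  module

end ReImA

lemma le_of_forall_pow_two_pow_le_mul_pow {c M K : ℝ} (hM : 0 ≤ M)
    (h : ∀ n : ℕ, c ^ 2 ^ n ≤ K * M ^ 2 ^ n) : c ≤ M := by
  by_contra! hMc
  rcases hM.eq_or_lt with rfl | hM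
  · have h0 := h 0
    norm_num at h0
    linarith
  · have hr : 1 < c / M := (one_lt_div hM).mpr hMc
    obtain ⟨n, hn⟩ := pow_unbounded_of_one_lt K hr
    have hK : (c / M) ^ 2 ^ n ≤ K := by
      rw [div_pow, div_le_iff₀ (pow_pos hM _)]
      exact h n
    exact (hn.trans_le ((pow_le_pow_right₀ hr.le Nat.lt_two_pow_self.le).trans hK)).false

section OpSeminorm

variable {A Z W Z' W' : H →L[ℂ] H}

omit [CompleteSpace H] in
lemma opnA_nonneg (Z : H →L[ℂ] H) : 0 ≤ opnA A Z :=
  Real.sSup_nonneg (by rintro _ ⟨x, -, rfl⟩; exact vnA_nonneg _)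

omit [CompleteSpace H] in
lemma opnA_le_of_forall_le_mul {C : ℝ} (hC : 0 ≤ C) (h : ∀ x, vnA A (Z x) ≤ C * vnA A x) :
    opnA A Z ≤ C :=
  Real.sSup_le (by rintro _ ⟨x, hx : vnA A x = 1, rfl⟩; simpa [hx] using h x) hC

lemma vnA_apply_sq_le (hA : A.IsPositive) (h : IsAdjA A W Z) (x : H) :
    vnA A (Z x) ^ 2 ≤ vnA A x * vnA A (W (Z x)) := by
  rw [vnA_sq hA, h.apply, adjoint_inner_left]
  exact re_inner_le_vnA_mul_vnA hA _ _

lemma vnA_apply_pow_two_pow_le (hA : A.IsPositive) (hZ : IsAdjA A Z Z) {x : H}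
    (hx : vnA A x = 1) (n : ℕ) : vnA A (Z x) ^ 2 ^ n ≤ vnA A ((Z ^ 2 ^ n) x) := by
  induction n with
  | zero => simp
  | succ n ih =>
    calc vnA A (Z x) ^ 2 ^ (n + 1) = (vnA A (Z x) ^ 2 ^ n) ^ 2 := by rw [pow_succ, pow_mul]
      _ ≤ vnA A ((Z ^ 2 ^ n) x) ^ 2 := by gcongr; exact pow_nonneg (vnA_nonneg _) _
      _ ≤ vnA A ((Z ^ 2 ^ n) ((Z ^ 2 ^ n) x)) := by
        simpa [hx] using vnA_apply_sq_le hA (hZ.pow (2 ^ n)) x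
      _ = vnA A ((Z ^ 2 ^ (n + 1)) x) := by rw [pow_succ, pow_mul, sq, mul_apply_eq_comp]

lemma vnA_apply_le_norm (hA : A.IsPositive) (hZ : IsAdjA A Z Z) {x : H}
    (hx : vnA A x = 1) : vnA A (Z x) ≤ ‖Z‖ := by
  refine le_of_forall_pow_two_pow_le_mul_pow (K := ‖CFC.sqrt A‖ * ‖x‖) (norm_nonneg Z) fun n => ?_
  calc vnA A (Z x) ^ 2 ^ n ≤ vnA A ((Z ^ 2 ^ n) x) := vnA_apply_pow_two_pow_le hA hZ hx n
    _ ≤ ‖CFC.sqrt A‖ * (‖Z ^ 2 ^ n‖ * ‖x‖) := by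
      grw [vnA_le_norm_mul hA, le_opNorm]
    _ ≤ ‖CFC.sqrt A‖ * ‖x‖ * ‖Z‖ ^ 2 ^ n := by
      grw [norm_pow_le' Z (Nat.two_pow_pos n)]
      exact le_of_eq (by ring)

lemma bddAbove_vnA_image (hA : A.IsPositive) (h : IsAdjA A W Z) :
    BddAbove ((fun x => vnA A (Z x)) '' {x | vnA A x = 1}) := by
  refine ⟨√‖W ∘L Z‖, ?_⟩
  rintro _ ⟨x, hx, rfl⟩
  refine Real.le_sqrt_of_sq_le ?_
  calc vnA A (Z x) ^ 2 ≤ vnA A x * vnA A (W (Z x)) := vnA_apply_sq_le hA h x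
    _ ≤ ‖W ∘L Z‖ := by
      rw [hx, one_mul]
      exact vnA_apply_le_norm hA (h.comp (h.symm hA.isSelfAdjoint)) hx

lemma vnA_le_opnA (hA : A.IsPositive) (h : IsAdjA A W Z) {x : H} (hx : vnA A x = 1) :
    vnA A (Z x) ≤ opnA A Z :=
  le_csSup (bddAbove_vnA_image hA h) ⟨x, hx, rfl⟩

lemma vnA_apply_le_opnA_mul (hA : A.IsPositive) (h : IsAdjA A W Z) (x : H) :
    vnA A (Z x) ≤ opnA A Z * vnA A x := by
  rcases (vnA_nonneg (A := A) x).eq_or_lt with h0 | hpos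
  · have hsq := vnA_apply_sq_le hA h x
    rw [← h0, zero_mul] at hsq
    rw [← h0, mul_zero]
    nlinarith [vnA_nonneg (A := A) (Z x)]
  · set t := vnA A x
    have ht : ‖((t⁻¹ : ℝ) : ℂ)‖ = t⁻¹ := by simp [hpos.le]
    have hle := vnA_le_opnA hA h (x := ((t⁻¹ : ℝ) : ℂ) • x)
      (by rw [vnA_smul hA, ht, inv_mul_cancel₀ hpos.ne'])
    rwa [map_smul, vnA_smul hA, ht, inv_mul_le_iff₀ hpos, mul_comm] at hle

lemma opnA_add_le (hA : A.IsPositive) (hZ : IsAdjA A Z' Z) (hW : IsAdjA A W' W) :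
    opnA A (Z + W) ≤ opnA A Z + opnA A W :=
  opnA_le_of_forall_le_mul (add_nonneg (opnA_nonneg _) (opnA_nonneg _)) fun x => by
    rw [add_apply, add_mul]
    exact (vnA_add_le hA _ _).trans
      (add_le_add (vnA_apply_le_opnA_mul hA hZ x) (vnA_apply_le_opnA_mul hA hW x))

lemma opnA_smul_le (hA : A.IsPositive) (h : IsAdjA A W Z) (c : ℂ) :
    opnA A (c • Z) ≤ ‖c‖ * opnA A Z :=
  opnA_le_of_forall_le_mul (mul_nonneg (norm_nonneg c) (opnA_nonneg Z)) fun x => by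
    rw [smul_apply, vnA_smul hA, mul_assoc]
    gcongr
    exact vnA_apply_le_opnA_mul hA h x

lemma opnA_le_sqrt_opnA_comp (hA : A.IsPositive) (h : IsAdjA A W Z) :
    opnA A Z ≤ √(opnA A (W ∘L Z)) :=
  opnA_le_of_forall_le_mul (Real.sqrt_nonneg _) fun x => by
    rw [← Real.sqrt_sq (vnA_nonneg x), ← Real.sqrt_mul (opnA_nonneg _)]
    refine Real.le_sqrt_of_sq_le ?_
    calc vnA A (Z x) ^ 2 ≤ vnA A x * vnA A ((W ∘L Z) x) := vnA_apply_sq_le hA h x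
      _ ≤ vnA A x * (opnA A (W ∘L Z) * vnA A x) := by
        gcongr
        · exact vnA_nonneg x
        · exact vnA_apply_le_opnA_mul hA (h.comp (h.symm hA.isSelfAdjoint)) x
      _ = opnA A (W ∘L Z) * vnA A x ^ 2 := by ring

lemma opnA_le_of_isAdjA (hA : A.IsPositive) (h : IsAdjA A W Z) : opnA A Z ≤ opnA A W :=
  opnA_le_of_forall_le_mul (opnA_nonneg W) fun x => by
    have hsq := vnA_apply_sq_le hA h x
    have hW := vnA_apply_le_opnA_mul hA (h.symm hA.isSelfAdjoint) (Z x)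
    rcases (vnA_nonneg (A := A) (Z x)).eq_or_lt with h0 | hpos
    · rw [← h0]
      exact mul_nonneg (opnA_nonneg W) (vnA_nonneg x)
    · refine le_of_mul_le_mul_right ?_ hpos
      nlinarith [vnA_nonneg (A := A) x]

lemma opnA_eq_of_isAdjA (hA : A.IsPositive) (h : IsAdjA A W Z) : opnA A Z = opnA A W :=
  (opnA_le_of_isAdjA hA h).antisymm (opnA_le_of_isAdjA hA (h.symm hA.isSelfAdjoint))

end OpSeminorm

theorem stmt19_general (A T Ts : H →L[ℂ] H) (hA : A.IsPositive)
    (hTs : IsReducedAdjA A T Ts) :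
    (1/4) * opnA A (Ts ∘L T + T ∘L Ts) ≤
      (1/2) * Real.sqrt (opnA A ((ReA T Ts) ^ (4:ℕ) + (ImA T Ts) ^ (4:ℕ)) +
        2 * opnA A (((ImA T Ts) ^ (2:ℕ)) ∘L ((ReA T Ts) ^ (2:ℕ)))) := by
  set R := ReA T Ts
  set J := ImA T Ts
  have hT : IsAdjA A T Ts := hTs.1
  have hR : IsAdjA A R R := hT.reA hA.isSelfAdjoint
  have hJ : IsAdjA A J J := hT.imA hA.isSelfAdjoint
  have hX : IsAdjA A (R ^ 2 + J ^ 2) (R ^ 2 + J ^ 2) := (hR.pow 2).add (hJ.pow 2)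
  have hP : IsAdjA A (R ^ 4 + J ^ 4) (R ^ 4 + J ^ 4) := (hR.pow 4).add (hJ.pow 4)
  have hJR : IsAdjA A ((J ^ 2) ∘L (R ^ 2)) ((R ^ 2) ∘L (J ^ 2)) := (hJ.pow 2).comp (hR.pow 2)
  have hRJ : IsAdjA A ((R ^ 2) ∘L (J ^ 2)) ((J ^ 2) ∘L (R ^ 2)) := (hR.pow 2).comp (hJ.pow 2)
  have hX_sq : (R ^ 2 + J ^ 2) ∘L (R ^ 2 + J ^ 2) =
      (R ^ 4 + J ^ 4 + (R ^ 2) ∘L (J ^ 2)) + (J ^ 2) ∘L (R ^ 2) := by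
    simp only [← mul_def]
    noncomm_ring
  calc (1/4) * opnA A (Ts ∘L T + T ∘L Ts)
      = (1/4) * opnA A ((2 : ℂ) • (R ^ 2 + J ^ 2)) := by
        rw [comp_add_comp_eq_two_smul_reA_sq_add_imA_sq]
    _ ≤ (1/4) * (‖(2 : ℂ)‖ * opnA A (R ^ 2 + J ^ 2)) := by grw [opnA_smul_le hA hX]
    _ ≤ (1/2) * √(opnA A ((R ^ 2 + J ^ 2) ∘L (R ^ 2 + J ^ 2))) := by
      grw [opnA_le_sqrt_opnA_comp hA hX]
      rw [Complex.norm_two]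
      exact le_of_eq (by ring)
    _ ≤ (1/2) * √(opnA A (R ^ 4 + J ^ 4 + (R ^ 2) ∘L (J ^ 2)) + opnA A ((J ^ 2) ∘L (R ^ 2))) := by
      grw [hX_sq, opnA_add_le hA (hP.add hJR) hRJ]
    _ ≤ (1/2) * √(opnA A (R ^ 4 + J ^ 4) + 2 * opnA A ((J ^ 2) ∘L (R ^ 2))) := by
      grw [opnA_add_le hA hP hJR, opnA_eq_of_isAdjA hA hJR, two_mul, add_assoc]

theorem stmt19 (A T Ts : H →L[ℂ] H) (hA : A.IsPositive) (hA0 : A ≠ 0)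
    (hTs : IsReducedAdjA A T Ts) :
    (1/4) * opnA A (Ts ∘L T + T ∘L Ts) ≤
      (1/2) * Real.sqrt (opnA A ((ReA T Ts) ^ (4:ℕ) + (ImA T Ts) ^ (4:ℕ)) +
        2 * opnA A (((ImA T Ts) ^ (2:ℕ)) ∘L ((ReA T Ts) ^ (2:ℕ)))) :=
  stmt19_general A T Ts hA hTs
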